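/- For a compact set a ⊆ ℝ² with vol(a) > 0 fixed, and fixed ε > 0, the function (θ, β) ↦ P^ε_{(θ,β)}(a) := vol(O^ε(F_{(θ,β)}(a)) \ F_{(θ,β)}(a)) / vol(a) is continuous on [−π/2, π/2] × [1, ∞). -/

import Mathlib

open Real MeasureTheory Metric Set

noncomputable def Fmap (θ β : ℝ) (x : EuclideanSpace ℝ (Fin 2)) : EuclideanSpace ℝ (Fin 2) :=
  WithLp.toLp 2 ![(β * cos θ ^ 2 + (1/β) * sin θ ^ 2) * x 0 + ((β - 1/β) * sin θ * cos θ) * x 1,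
    ((β - 1/β) * sin θ * cos θ) * x 0 + (β * sin θ ^ 2 + (1/β) * cos θ ^ 2) * x 1]

noncomputable def Pfun (ε θ β : ℝ) (a : Set (EuclideanSpace ℝ (Fin 2))) : ℝ :=
  (volume (cthickening ε (Fmap θ β '' a) \ (Fmap θ β '' a))).toReal / (volume a).toReal

/-!
Since `F_{(θ,β)}` is linear of determinant one, `P^ε_{(θ,β)}(a)` equals
`(vol(O^ε(F_{(θ,β)}(a))) - vol(a)) / vol(a)`, so it suffices that `p ↦ vol(O^ε(F_p(a)))` is
continuous. As `p → p₀`, `F_p → F_{p₀}` uniformly on the compact set `a`, so the Hausdorff distance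
`d` between `F_p(a)` and `K = F_{p₀}(a)` tends to `0` and `O^{ε-d}(K) ⊆ O^ε(F_p(a)) ⊆ O^{ε+d}(K)`.
It remains that `r ↦ vol(O^r(K))` is continuous at `r = ε > 0`. From above this is continuity of
measure along a decreasing family; from below the union of the `O^r(K)`, `r < ε`, is the open
`ε`-thickening, which misses only the level set `{x | dist(x, K) = ε}`. That set is Lebesgue-null:
each of its points lies on the boundary of a ball of radius `ε` disjoint from it, so none of them
is a density point.
-/

open scoped ENNReal Topology
open Filter

theorem tendsto_measure_biUnion_lt {α : Type*} {_ : MeasurableSpace α} {μ : Measure α}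
    {ι : Type*} [LinearOrder ι] [DenselyOrdered ι] [TopologicalSpace ι]
    [OrderTopology ι] [FirstCountableTopology ι] {s : ι → Set α} {a : ι}
    (hm : ∀ i j, i ≤ j → j < a → s i ⊆ s j) :
    Tendsto (μ ∘ s) (𝓝[<] a) (𝓝 (μ (⋃ r < a, s r))) := by
  have : (atTop : Filter (Iio a)).IsCountablyGenerated := by
    rw [← comap_coe_Iio_nhdsLT a]; infer_instance
  simp_rw [← map_coe_Iio_atTop a, tendsto_map'_iff, ← mem_Iio, biUnion_eq_iUnion]
  exact tendsto_measure_iUnion_atTop fun i j h ↦ hm i j h j.2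

theorem biUnion_cthickening_lt_eq_thickening {α : Type*} [PseudoMetricSpace α] (s : Set α)
    {ε : ℝ} (hε : 0 < ε) :
    ⋃ r < ε, cthickening r s = thickening ε s := by
  refine Subset.antisymm (iUnion₂_subset fun r hr => cthickening_subset_thickening' hε hr s)
    fun x hx => ?_
  obtain ⟨c, hxc, hcε⟩ := exists_between (mem_thickening_iff_infEDist_lt.1 hx)
  refine mem_iUnion₂.2 ⟨c.toReal, ENNReal.toReal_lt_of_lt_ofReal hcε, ?_⟩
  rw [mem_cthickening_iff, ENNReal.ofReal_toReal hcε.ne_top]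
  exact hxc.le

theorem subset_cthickening_of_hausdorffEDist_le {α : Type*} [PseudoEMetricSpace α] {s t : Set α}
    {δ : ℝ} (h : hausdorffEDist s t ≤ ENNReal.ofReal δ) : s ⊆ cthickening δ t :=
  fun _ hx => mem_cthickening_iff.2 ((infEDist_le_hausdorffEDist_of_mem hx).trans h)

theorem tendsto_hausdorffEDist_image_of_tendstoUniformlyOn {ι α β : Type*} [PseudoEMetricSpace β]
    {l : Filter ι} {F : ι → α → β} {f : α → β} {s : Set α} (h : TendstoUniformlyOn F f l s) :
    Tendsto (fun i => hausdorffEDist (F i '' s) (f '' s)) l (𝓝 0) := by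
  refine ENNReal.tendsto_nhds_zero.2 fun δ hδ => ?_
  filter_upwards [EMetric.tendstoUniformlyOn_iff.1 h δ hδ] with i hi
  refine hausdorffEDist_le_of_mem_edist ?_ ?_ <;> rintro _ ⟨x, hx, rfl⟩
  · exact ⟨f x, mem_image_of_mem f hx, by rw [edist_comm]; exact (hi x hx).le⟩
  · exact ⟨F i x, mem_image_of_mem _ hx, (hi x hx).le⟩

theorem tendstoUniformlyOn_of_continuousOn_prod {X α β : Type*} [UniformSpace X]
    [LocallyCompactSpace X] [UniformSpace α] [UniformSpace β] {F : X → α → β} {x : X}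
    {V : Set X} {s : Set α} (hV : V ∈ 𝓝 x) (hs : IsCompact s)
    (hF : ContinuousOn (Function.uncurry F) (V ×ˢ s)) :
    TendstoUniformlyOn F (F x) (𝓝 x) s := by
  obtain ⟨U, hU, hUV, hUc⟩ := local_compact_nhds hV
  have := ((hUc.prod hs).uniformContinuousOn_of_continuous
    (hF.mono (prod_mono hUV subset_rfl))).tendstoUniformlyOn (mem_of_mem_nhds hU)
  rwa [nhdsWithin_eq_nhds.2 hU] at this

section
variable {E : Type*} [NormedAddCommGroup E] [NormedSpace ℝ E] [MeasurableSpace E] [BorelSpace E]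
  [FiniteDimensional ℝ E] (μ : Measure E) [μ.IsAddHaarMeasure]

theorem not_tendsto_density_one_of_disjoint_ball {S : Set E} {x y : E} {ε : ℝ} (hε : 0 < ε)
    (hxy : dist x y = ε) (hS : Disjoint S (ball y ε)) :
    ¬ Tendsto (fun r => μ (S ∩ closedBall x r) / μ (closedBall x r)) (𝓝[>] 0) (𝓝 1) := by
  intro h
  obtain ⟨r, ⟨w, hwS, hw⟩, hr⟩ := ((Measure.eventually_nonempty_inter_smul_of_density_one μ S x h
    (ball (y - x) ε) measurableSet_ball (measure_ball_pos μ _ hε).ne').and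
    (Ioo_mem_nhdsGT zero_lt_one)).exists
  rw [_root_.smul_ball hr.1.ne', singleton_add_ball, Real.norm_of_nonneg hr.1.le] at hw
  refine hS.notMem_of_mem_left hwS (mem_ball.2 ?_)
  have hcenter : dist (x + r • (y - x)) y = (1 - r) * ε := by
    rw [dist_eq_norm, show x + r • (y - x) - y = (1 - r) • (x - y) by module, norm_smul,
      Real.norm_of_nonneg (by linarith [hr.2]), ← dist_eq_norm, hxy]
  calc dist w y ≤ dist w (x + r • (y - x)) + dist (x + r • (y - x)) y := dist_triangle _ _ _
    _ < r * ε + (1 - r) * ε := by rw [hcenter]; exact add_lt_add_of_lt_of_le (mem_ball.1 hw) le_rfl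
    _ = ε := by ring

theorem addHaar_cthickening_diff_thickening (s : Set E) {ε : ℝ} (hε : 0 < ε) :
    μ (cthickening ε s \ thickening ε s) = 0 := by
  set S := cthickening ε s \ thickening ε s
  have hS : MeasurableSet S :=
    isClosed_cthickening.measurableSet.diff isOpen_thickening.measurableSet
  rw [← Measure.restrict_eq_zero, ← ae_eq_bot, ← Filter.eventually_false_iff_eq_bot]
  filter_upwards [Besicovitch.ae_tendsto_measure_inter_div μ S, ae_restrict_mem hS]
    with x hdens ⟨hxc, hxt⟩
  have hedist : infEDist x s = ENNReal.ofReal ε :=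
    le_antisymm (mem_cthickening_iff.1 hxc) (not_lt.1 (hxt ∘ mem_thickening_iff_infEDist_lt.2))
  have hs : s.Nonempty := nonempty_iff_ne_empty.2 fun h => by simp [h] at hedist
  have hdist : infDist x s = ε := by rw [infDist, hedist, ENNReal.toReal_ofReal hε.le]
  obtain ⟨y, hy, hxy⟩ := exists_mem_closure_infDist_eq_dist hs x
  refine not_tendsto_density_one_of_disjoint_ball μ hε (hxy.symm.trans hdist) ?_ hdens
  refine disjoint_left.2 fun w hw hwb => hw.2 ?_
  rw [← thickening_closure]
  exact mem_thickening_iff.2 ⟨y, hy, mem_ball.1 hwb⟩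

theorem continuousAt_addHaar_cthickening {s : Set E} (hs : Bornology.IsBounded s) {ε : ℝ}
    (hε : 0 < ε) : ContinuousAt (fun r => μ (cthickening r s)) ε := by
  have hmono : ∀ i j : ℝ, i ≤ j → cthickening i s ⊆ cthickening j s :=
    fun i j h => cthickening_mono h s
  refine continuousAt_iff_continuous_left'_right'.2 ⟨?_, ?_⟩
  · have h := tendsto_measure_biUnion_lt (μ := μ) (a := ε) fun i j h _ => hmono i j h
    rwa [biUnion_cthickening_lt_eq_thickening s hε, measure_eq_measure_of_null_sdiff
      (thickening_subset_cthickening ε s) (addHaar_cthickening_diff_thickening μ s hε)] at h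
  · have h := tendsto_measure_biInter_gt (μ := μ) (a := ε)
      (fun r _ => isClosed_cthickening.nullMeasurableSet) (fun i j _ h => hmono i j h)
      ⟨ε + 1, by linarith, hs.cthickening.measure_lt_top.ne⟩
    rwa [← cthickening_eq_iInter_cthickening] at h

theorem tendsto_addHaar_cthickening_of_hausdorffEDist {ι : Type*} {l : Filter ι} {K : Set E}
    (hK : Bornology.IsBounded K) {Ks : ι → Set E}
    (h : Tendsto (fun i => hausdorffEDist (Ks i) K) l (𝓝 0)) {ε : ℝ} (hε : 0 < ε) :
    Tendsto (fun i => μ (cthickening ε (Ks i))) l (𝓝 (μ (cthickening ε K))) := by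
  set d : ι → ℝ := fun i => (hausdorffEDist (Ks i) K).toReal
  have hd : Tendsto d l (𝓝 0) := by
    simpa [d, Function.comp_def] using (ENNReal.tendsto_toReal ENNReal.zero_ne_top).comp h
  have hd0 : ∀ i, 0 ≤ d i := fun _ => ENNReal.toReal_nonneg
  have hcont := (continuousAt_addHaar_cthickening μ hK hε).tendsto
  have hfin : ∀ᶠ i in l, hausdorffEDist (Ks i) K = ENNReal.ofReal (d i) := by
    filter_upwards [h.eventually (gt_mem_nhds ENNReal.zero_lt_top)] with i hi
    exact (ENNReal.ofReal_toReal hi.ne).symm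
  -- `cthickening (ε - d i) K ⊆ cthickening ε (Ks i) ⊆ cthickening (ε + d i) K`
  refine tendsto_of_tendsto_of_tendsto_of_le_of_le'
    (hcont.comp (by simpa using tendsto_const_nhds.sub hd))
    (hcont.comp (by simpa using tendsto_const_nhds.add hd)) ?_ ?_
  · filter_upwards [hfin, hd.eventually (gt_mem_nhds hε)] with i hi hiε
    refine measure_mono ?_
    have := cthickening_cthickening_subset (sub_nonneg.2 hiε.le) (hd0 i) (Ks i)
    rw [sub_add_cancel] at this
    exact (cthickening_subset_of_subset _
      (subset_cthickening_of_hausdorffEDist_le (hausdorffEDist_comm.trans_le hi.le))).trans this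
  · filter_upwards [hfin] with i hi
    exact measure_mono ((cthickening_subset_of_subset ε
      (subset_cthickening_of_hausdorffEDist_le hi.le)).trans
      (cthickening_cthickening_subset hε.le (hd0 i) K))
end

noncomputable def Fmat (θ β : ℝ) : Matrix (Fin 2) (Fin 2) ℝ :=
  !![β * cos θ ^ 2 + (1/β) * sin θ ^ 2, (β - 1/β) * sin θ * cos θ;
     (β - 1/β) * sin θ * cos θ, β * sin θ ^ 2 + (1/β) * cos θ ^ 2]

theorem Fmap_eq_toLpLin (θ β : ℝ) : Fmap θ β = Matrix.toLpLin 2 2 (Fmat θ β) := by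
  ext x i
  fin_cases i <;> simp [Fmap, Fmat, Matrix.toLpLin_apply, dotProduct, Fin.sum_univ_two]

theorem det_Fmat (θ : ℝ) {β : ℝ} (hβ : β ≠ 0) : (Fmat θ β).det = 1 := by
  rw [Fmat, Matrix.det_fin_two_of]
  field_simp
  linear_combination (β ^ 2 * (sin θ ^ 2 + cos θ ^ 2 + 1)) * sin_sq_add_cos_sq θ

theorem volume_image_Fmap (θ : ℝ) {β : ℝ} (hβ : β ≠ 0) (s : Set (EuclideanSpace ℝ (Fin 2))) :
    volume (Fmap θ β '' s) = volume s := by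
  rw [Fmap_eq_toLpLin, Measure.addHaar_image_linearMap, LinearMap.det_toLpLin, det_Fmat θ hβ]
  simp

theorem continuous_Fmap (θ β : ℝ) : Continuous (Fmap θ β) := by
  unfold Fmap
  fun_prop

theorem continuousOn_Fmap :
    ContinuousOn (fun q : (ℝ × ℝ) × EuclideanSpace ℝ (Fin 2) => Fmap q.1.1 q.1.2 q.2)
      ({p | p.2 ≠ 0} ×ˢ univ) := by
  rintro q ⟨hq : q.1.2 ≠ 0, -⟩
  refine ContinuousAt.continuousWithinAt ?_
  unfold Fmap
  fun_prop (disch := exact hq)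

theorem continuousAt_volume_cthickening_image_Fmap {a : Set (EuclideanSpace ℝ (Fin 2))}
    (ha : IsCompact a) {ε : ℝ} (hε : 0 < ε) {p : ℝ × ℝ} (hp : p.2 ≠ 0) :
    ContinuousAt (fun q : ℝ × ℝ => (volume (cthickening ε (Fmap q.1 q.2 '' a))).toReal) p := by
  have hK : IsCompact (Fmap p.1 p.2 '' a) := ha.image (continuous_Fmap _ _)
  have hunif : TendstoUniformlyOn (fun q : ℝ × ℝ => Fmap q.1 q.2) (Fmap p.1 p.2) (𝓝 p) a :=
    tendstoUniformlyOn_of_continuousOn_prod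
      ((isOpen_ne_fun continuous_snd continuous_const).mem_nhds hp) ha
      (continuousOn_Fmap.mono (prod_mono subset_rfl (subset_univ a)))
  exact (ENNReal.continuousAt_toReal hK.cthickening.measure_lt_top.ne).tendsto.comp
    (tendsto_addHaar_cthickening_of_hausdorffEDist volume hK.isBounded
      (tendsto_hausdorffEDist_image_of_tendstoUniformlyOn hunif) hε)

theorem Pfun_eq_sub_div {a : Set (EuclideanSpace ℝ (Fin 2))} (ha : IsCompact a) (ε θ : ℝ)
    {β : ℝ} (hβ : β ≠ 0) :
    Pfun ε θ β a =
      ((volume (cthickening ε (Fmap θ β '' a))).toReal - (volume a).toReal) /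
        (volume a).toReal := by
  have hK : IsCompact (Fmap θ β '' a) := ha.image (continuous_Fmap θ β)
  rw [Pfun, measure_sdiff (self_subset_cthickening _) hK.isClosed.nullMeasurableSet
    hK.measure_lt_top.ne, ENNReal.toReal_sub_of_le (measure_mono (self_subset_cthickening _))
    hK.cthickening.measure_lt_top.ne, volume_image_Fmap θ hβ]

theorem Pfun_continuousOn_general (a : Set (EuclideanSpace ℝ (Fin 2))) (ha : IsCompact a)
    (ε : ℝ) (hε : 0 < ε) :
    ContinuousOn (fun p : ℝ × ℝ => Pfun ε p.1 p.2 a)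
      (Set.Icc (-(π/2)) (π/2) ×ˢ Set.Ici 1) := by
  have hβ : ∀ p ∈ Set.Icc (-(π/2)) (π/2) ×ˢ Set.Ici (1 : ℝ), p.2 ≠ 0 :=
    fun p hp => (zero_lt_one.trans_le hp.2).ne'
  refine ContinuousOn.congr (fun p hp => ?_) fun p hp => Pfun_eq_sub_div ha ε p.1 (hβ p hp)
  exact (((continuousAt_volume_cthickening_image_Fmap ha hε (hβ p hp)).sub
    continuousAt_const).div_const _).continuousWithinAt

theorem Pfun_continuousOn (a : Set (EuclideanSpace ℝ (Fin 2))) (ha : IsCompact a)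
    (hvol : 0 < volume a) (ε : ℝ) (hε : 0 < ε) :
    ContinuousOn (fun p : ℝ × ℝ => Pfun ε p.1 p.2 a)
      (Set.Icc (-(π/2)) (π/2) ×ˢ Set.Ici 1) :=
  Pfun_continuousOn_general a ha ε hε
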